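/- arXiv:2211.11842 — 2 statements merged into one kernel-verified Lean document; each statement's English description precedes it below -/
import Mathlib

section
/- Let Z ⊆ ℝⁿ be nonempty, compact, convex, and let g(z) = Az - b + ρ. For λ₁, λ₂ ∈ ℝʸ, let z₁ and z₂ be the unique minimizers over Z of z ↦ cᵀz + (α/2)‖z‖² + λ₁ᵀg(z) and z ↦ cᵀz + (α/2)‖z‖² + λ₂ᵀg(z), respectively. Then (λ₂ - λ₁)ᵀ(g(z₁) - g(z₂)) ≥ (α/‖A‖²)·‖g(z₂) - g(z₁)‖². -/
open scoped RealInnerProductSpace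

/-- If `z₁, z₂` are the minimizers over `Z` of the regularized objectives with multipliers
`λ₁, λ₂`, then `(λ₂ - λ₁)ᵀ(g(z₁) - g(z₂)) ≥ (α/‖A‖²)‖g(z₂) - g(z₁)‖²`, where
`g(z) = Az - b + ρ`. -/
theorem stmt_9 (n y : ℕ) (c : EuclideanSpace ℝ (Fin n))
    (A : EuclideanSpace ℝ (Fin n) →L[ℝ] EuclideanSpace ℝ (Fin y))
    (b ρ : EuclideanSpace ℝ (Fin y)) (α : ℝ) (hα : 0 < α) (hA : 0 < ‖A‖)
    (Z : Set (EuclideanSpace ℝ (Fin n))) (hne : Z.Nonempty) (hcomp : IsCompact Z)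
    (hconv : Convex ℝ Z) (lam₁ lam₂ : EuclideanSpace ℝ (Fin y))
    (g : EuclideanSpace ℝ (Fin n) → EuclideanSpace ℝ (Fin y))
    (hg : ∀ z, g z = A z - b + ρ)
    (z₁ z₂ : EuclideanSpace ℝ (Fin n))
    (hz₁ : z₁ ∈ Z ∧ ∀ z ∈ Z,
      ⟪c, z₁⟫ + α / 2 * ‖z₁‖ ^ 2 + ⟪lam₁, g z₁⟫ ≤ ⟪c, z⟫ + α / 2 * ‖z‖ ^ 2 + ⟪lam₁, g z⟫)
    (hz₂ : z₂ ∈ Z ∧ ∀ z ∈ Z,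
      ⟪c, z₂⟫ + α / 2 * ‖z₂‖ ^ 2 + ⟪lam₂, g z₂⟫ ≤ ⟪c, z⟫ + α / 2 * ‖z‖ ^ 2 + ⟪lam₂, g z⟫) :
    ⟪lam₂ - lam₁, g z₁ - g z₂⟫ ≥ α / ‖A‖ ^ 2 * ‖g z₂ - g z₁‖ ^ 2 := by
  obtain ⟨hz₁Z, hmin₁⟩ := hz₁
  obtain ⟨hz₂Z, hmin₂⟩ := hz₂
  -- Strong-convexity refinement of optimality
  have key : ∀ (lam : EuclideanSpace ℝ (Fin y)) (u v : EuclideanSpace ℝ (Fin n)),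
      u ∈ Z → v ∈ Z →
      (∀ z ∈ Z, ⟪c, u⟫ + α / 2 * ‖u‖ ^ 2 + ⟪lam, g u⟫ ≤
        ⟪c, z⟫ + α / 2 * ‖z‖ ^ 2 + ⟪lam, g z⟫) →
      ⟪c, u⟫ + α / 2 * ‖u‖ ^ 2 + ⟪lam, g u⟫ + α / 2 * ‖v - u‖ ^ 2 ≤
        ⟪c, v⟫ + α / 2 * ‖v‖ ^ 2 + ⟪lam, g v⟫ := by
    intro lam u v hu hv hmin
    set d : EuclideanSpace ℝ (Fin n) := v - u with hd
    set L : ℝ := ⟪c, d⟫ + α * ⟪u, d⟫ + ⟪lam, A d⟫ with hLdef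
    have hstep : ∀ t : ℝ, t ∈ Set.Ioc (0:ℝ) 1 → 0 ≤ L + α / 2 * t * ‖d‖ ^ 2 := by
      intro t ht
      have hw : u + t • d ∈ Z := by
        have h := hconv hu hv (by linarith [ht.2] : (0:ℝ) ≤ 1 - t) ht.1.le (by ring)
        have : (1 - t) • u + t • v = u + t • d := by
          rw [hd]; rw [smul_sub]; module
        rwa [this] at h
      have e1 : ⟪c, u + t • d⟫ = ⟪c, u⟫ + t * ⟪c, d⟫ := by
        rw [inner_add_right, real_inner_smul_right]
      have e2 : ‖u + t • d‖ ^ 2 = ‖u‖ ^ 2 + 2 * (t * ⟪u, d⟫) + t ^ 2 * ‖d‖ ^ 2 := by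
        rw [norm_add_sq_real, real_inner_smul_right, norm_smul, Real.norm_eq_abs,
          mul_pow, sq_abs]
      have e3 : g (u + t • d) = g u + t • (A d) := by
        rw [hg, hg, map_add, map_smul]; abel
      have e4 : ⟪lam, g (u + t • d)⟫ = ⟪lam, g u⟫ + t * ⟪lam, A d⟫ := by
        rw [e3, inner_add_right, real_inner_smul_right]
      have h := hmin _ hw
      rw [e1, e2, e4] at h
      have ht0 : (0:ℝ) < t := ht.1
      have h' : 0 ≤ t * (L + α / 2 * t * ‖d‖ ^ 2) := by
        rw [hLdef]; nlinarith [h]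
      exact nonneg_of_mul_nonneg_right h' ht0
    have hL : 0 ≤ L := by
      have hcont : Filter.Tendsto (fun t : ℝ => L + α / 2 * t * ‖d‖ ^ 2)
          (nhdsWithin 0 (Set.Ioi 0)) (nhds (L + α / 2 * 0 * ‖d‖ ^ 2)) := by
        apply Filter.Tendsto.mono_left _ nhdsWithin_le_nhds
        have hc : Continuous fun t : ℝ => L + α / 2 * t * ‖d‖ ^ 2 :=
          continuous_const.add ((continuous_const.mul continuous_id).mul continuous_const)
        exact hc.tendsto 0
      have hev : ∀ᶠ t in nhdsWithin (0:ℝ) (Set.Ioi 0),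
          (0:ℝ) ≤ L + α / 2 * t * ‖d‖ ^ 2 := by
        filter_upwards [Ioc_mem_nhdsGT_of_mem (Set.mem_Ico.2 ⟨le_refl 0, one_pos⟩)]
          with t ht using hstep t ht
      have := ge_of_tendsto hcont hev
      simpa using this
    -- now expand at v = u + d
    have e2 : ‖v‖ ^ 2 = ‖u‖ ^ 2 + 2 * ⟪u, d⟫ + ‖d‖ ^ 2 := by
      have : v = u + d := by rw [hd]; abel
      rw [this, norm_add_sq_real]
    have e4 : ⟪lam, g v⟫ = ⟪lam, g u⟫ + ⟪lam, A d⟫ := by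
      have hv' : v = u + d := by rw [hd]; abel
      have : g v = g u + A d := by rw [hg, hg, hv', map_add]; abel
      rw [this, inner_add_right]
    have e1 : ⟪c, v⟫ = ⟪c, u⟫ + ⟪c, d⟫ := by
      have hv' : v = u + d := by rw [hd]; abel
      rw [hv', inner_add_right]
    rw [e1, e2, e4]
    rw [hLdef] at hL
    nlinarith [hL]
  have k1 := key lam₁ z₁ z₂ hz₁Z hz₂Z hmin₁
  have k2 := key lam₂ z₂ z₁ hz₂Z hz₁Z hmin₂
  have hnorm_symm : ‖z₁ - z₂‖ = ‖z₂ - z₁‖ := norm_sub_rev _ _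
  have hsum : α * ‖z₂ - z₁‖ ^ 2 ≤ ⟪lam₂ - lam₁, g z₁ - g z₂⟫ := by
    rw [inner_sub_left, inner_sub_right, inner_sub_right]
    rw [hnorm_symm] at k2
    linarith
  -- norm bound
  have hAle : ‖g z₂ - g z₁‖ ≤ ‖A‖ * ‖z₂ - z₁‖ := by
    have : g z₂ - g z₁ = A (z₂ - z₁) := by rw [hg, hg, map_sub]; abel
    rw [this]; exact A.le_opNorm _
  have hsq : ‖g z₂ - g z₁‖ ^ 2 ≤ ‖A‖ ^ 2 * ‖z₂ - z₁‖ ^ 2 := by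
    nlinarith [norm_nonneg (g z₂ - g z₁), norm_nonneg (z₂ - z₁), hA.le]
  have hA2 : (0:ℝ) < ‖A‖ ^ 2 := by positivity
  have : α / ‖A‖ ^ 2 * ‖g z₂ - g z₁‖ ^ 2 ≤ α * ‖z₂ - z₁‖ ^ 2 := by
    rw [div_mul_eq_mul_div, div_le_iff₀ hA2]
    nlinarith [hsq]
  linarith
end

section
/- Suppose a(t₂) ≤ q_d·a(t₁) + 4r²q_d q_p^{2(t₂-t₁)}‖A‖² + 8r²β²q_p^{t₂-t₁}‖A‖² holds whenever t₁ < t₂ are consecutive elements of an increasing sequence t₁ < t₂ < ... < t_n of natural numbers, where q_d, q_p ∈ [0,1), r, β ≥ 0, ‖A‖ ≥ 0, and a is a nonnegative function. Then a(t_n) ≤ q_d^{n-1}·a(t₁) + (4r²q_d q_p²‖A‖² + 8r²β²q_p‖A‖²)·∑_{i=0}^{n-1} q_d^i. -/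
open Finset

/-- Unrolling the dual-convergence recursion of Lemma 4 along an increasing sequence of
dual update times `t 0 < t 1 < ...` gives
`a (t n) ≤ q_d^n a (t 0) + (4r²q_d q_p²‖A‖² + 8r²β²q_p‖A‖²) ∑_{i<n} q_d^i`. -/
theorem stmt_17 (a : ℕ → ℝ) (qd qp r β normA : ℝ)
    (hqd0 : 0 ≤ qd) (hqd1 : qd < 1) (hqp0 : 0 ≤ qp) (hqp1 : qp < 1)
    (hr : 0 ≤ r) (hβ : 0 ≤ β) (hA : 0 ≤ normA)
    (hpos : ∀ k, 0 ≤ a k) (t : ℕ → ℕ) (hmono : ∀ k, t k < t (k + 1))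
    (hrec : ∀ k, a (t (k + 1)) ≤ qd * a (t k)
      + 4 * r ^ 2 * qd * qp ^ (2 * (t (k + 1) - t k)) * normA ^ 2
      + 8 * r ^ 2 * β ^ 2 * qp ^ (t (k + 1) - t k) * normA ^ 2) :
    ∀ n, a (t n) ≤ qd ^ n * a (t 0)
      + (4 * r ^ 2 * qd * qp ^ 2 * normA ^ 2 + 8 * r ^ 2 * β ^ 2 * qp * normA ^ 2) *
        ∑ i ∈ range n, qd ^ i := by
  intro n
  induction n with
  | zero => simp
  | succ n ih =>
    have hd : 1 ≤ t (n + 1) - t n := by have := hmono n; omega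
    have h1 : qp ^ (2 * (t (n + 1) - t n)) ≤ qp ^ 2 := by
      apply pow_le_pow_of_le_one hqp0 (le_of_lt hqp1); omega
    have h2 : qp ^ (t (n + 1) - t n) ≤ qp ^ 1 :=
      pow_le_pow_of_le_one hqp0 (le_of_lt hqp1) hd
    rw [pow_one] at h2
    have hc1 : 4 * r ^ 2 * qd * qp ^ (2 * (t (n + 1) - t n)) * normA ^ 2
        ≤ 4 * r ^ 2 * qd * qp ^ 2 * normA ^ 2 := by gcongr
    have hc2 : 8 * r ^ 2 * β ^ 2 * qp ^ (t (n + 1) - t n) * normA ^ 2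
        ≤ 8 * r ^ 2 * β ^ 2 * qp * normA ^ 2 := by gcongr
    set C := 4 * r ^ 2 * qd * qp ^ 2 * normA ^ 2 + 8 * r ^ 2 * β ^ 2 * qp * normA ^ 2 with hC
    set S := ∑ i ∈ range n, qd ^ i with hS
    have h3 : qd * a (t n) ≤ qd ^ (n + 1) * a (t 0) + C * (qd * S) := by
      calc qd * a (t n) ≤ qd * (qd ^ n * a (t 0) + C * S) :=
            mul_le_mul_of_nonneg_left ih hqd0
        _ = qd ^ (n + 1) * a (t 0) + C * (qd * S) := by ring
    calc a (t (n + 1)) ≤ qd * a (t n) + C := by have := hrec n; rw [hC]; linarith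
      _ ≤ qd ^ (n + 1) * a (t 0) + C * (qd * S) + C := by linarith
      _ = qd ^ (n + 1) * a (t 0) + C * ∑ i ∈ range (n + 1), qd ^ i := by
          rw [geom_sum_succ]; ring
end
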